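/- arXiv:1106.2933 — 3 statements merged into one kernel-verified Lean document; each statement's English description precedes it below -/
import Mathlib

section
/- Anyon exclusion principle: if Q(s,t) = q for s < t and Q(s,t) = q̄ for s > t, where q ∈ ℂ satisfies |q| = 1, q ≠ 1, and q^N = 1 for some N ≥ 2, then for every f ∈ L²(T), the N-fold Q-symmetric tensor power f^{⊛N} = P_N(f^{⊗N}) is zero. -/
open MeasureTheory

/-- `Q_π(t_1,…,t_n) = ∏_{i<j, π(i)>π(j)} Q(t_i,t_j)`. -/
def Qpi {T : Type*} (Q : T → T → ℂ) {n : ℕ} (π : Equiv.Perm (Fin n)) (t : Fin n → T) : ℂ :=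
  ∏ p ∈ Finset.univ.filter (fun p : Fin n × Fin n => p.1 < p.2 ∧ π p.2 < π p.1),
    Q (t p.1) (t p.2)

/-- The `Q`-symmetrization `P_n f = (1/n!) Σ_π Q_π(t) f(t∘π⁻¹)`. -/
noncomputable def Psym {T : Type*} (Q : T → T → ℂ) {n : ℕ} (f : (Fin n → T) → ℂ) :
    (Fin n → T) → ℂ :=
  fun t => ((n.factorial : ℂ))⁻¹ * ∑ π : Equiv.Perm (Fin n), Qpi Q π t * f (t ∘ ⇑π⁻¹)

/-- The anyonic kernel: `Q(s,t) = q` if `s < t`, `q̄` if `t < s` (and `1` on the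
diagonal, which is null). -/
noncomputable def anyonQ {T : Type*} [LinearOrder T] (q : ℂ) : T → T → ℂ :=
  fun s t => if s < t then q else if t < s then (starRingEnd ℂ) q else 1

/-! Off the diagonal, which is null, the points `t i` are distinct and
`Psym (anyonQ q) f^{⊗N} t = (N!)⁻¹ (∑_π Q_π(t)) ∏ f (t i)`, so it suffices that `∑_π Q_π(t) = 0`.
Let `t m` be the largest point. Post-composing `π` with the transposition of the adjacent values
`π m` and `π m + 1` creates or destroys exactly the inversion between `m` and the other index, and
so multiplies `Q_π(t)` by `q̄` (by `q⁻¹ = q̄` when the inversion is destroyed). Hence the sum over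
`{π | π m = v}` is `q̄ ^ v` times the sum over `{π | π m = 0}`, and the total carries the factor
`∑_{v < N} q̄ ^ v = 0`. -/

def inversions {n : ℕ} (π : Equiv.Perm (Fin n)) : Finset (Fin n × Fin n) :=
  Finset.univ.filter fun p => p.1 < p.2 ∧ π p.2 < π p.1

lemma Qpi_eq_prod_inversions {T : Type*} (Q : T → T → ℂ) {n : ℕ} (π : Equiv.Perm (Fin n))
    (t : Fin n → T) : Qpi Q π t = ∏ p ∈ inversions π, Q (t p.1) (t p.2) :=
  rfl

lemma inversions_swap_mul {n : ℕ} (π : Equiv.Perm (Fin (n + 1))) (v : Fin n)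
    {a b : Fin (n + 1)} (hab : a < b) (ha : π a = v.castSucc) (hb : π b = v.succ) :
    inversions (Equiv.swap v.castSucc v.succ * π) = insert (a, b) (inversions π) := by
  ext ⟨i, j⟩
  have hi : π i = v.castSucc ↔ i = a := by rw [← ha, π.injective.eq_iff]
  have hj : π j = v.castSucc ↔ j = a := by rw [← ha, π.injective.eq_iff]
  have hi' : π i = v.succ ↔ i = b := by rw [← hb, π.injective.eq_iff]
  have hj' : π j = v.succ ↔ j = b := by rw [← hb, π.injective.eq_iff]
  simp only [inversions, Finset.mem_insert, Finset.mem_filter, Finset.mem_univ, true_and,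
    Prod.mk.injEq]
  rw [Equiv.Perm.mul_apply, Equiv.Perm.mul_apply, Equiv.swap_apply_def, Equiv.swap_apply_def]
  split_ifs <;> simp only [Fin.ext_iff, Fin.lt_def, Fin.val_castSucc, Fin.val_succ] at * <;> omega

lemma Qpi_swap_mul {T : Type*} {n : ℕ} (Q : T → T → ℂ) (t : Fin (n + 1) → T)
    (π : Equiv.Perm (Fin (n + 1))) (v : Fin n) {a b : Fin (n + 1)} (hab : a < b)
    (ha : π a = v.castSucc) (hb : π b = v.succ) :
    Qpi Q (Equiv.swap v.castSucc v.succ * π) t = Q (t a) (t b) * Qpi Q π t := by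
  have hnotin : (a, b) ∉ inversions π := by
    simp [inversions, ha, hb, Fin.castSucc_lt_succ.le]
  rw [Qpi_eq_prod_inversions, inversions_swap_mul π v hab ha hb, Finset.prod_insert hnotin,
    Qpi_eq_prod_inversions]

lemma sum_perm_eq_zero_of_swap_mul {R : Type*} [Semiring R] {n : ℕ}
    (g : Equiv.Perm (Fin (n + 1)) → R) (m : Fin (n + 1)) (c : R)
    (hc : ∑ i : Fin (n + 1), c ^ (i : ℕ) = 0)
    (hg : ∀ π (v : Fin n), π m = v.castSucc →
      g (Equiv.swap v.castSucc v.succ * π) = c * g π) :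
    ∑ π, g π = 0 := by
  set S : Fin (n + 1) → R := fun v => ∑ π ∈ Finset.univ.filter (fun π => π m = v), g π
  have hstep (v : Fin n) : S v.succ = c * S v.castSucc := by
    rw [Finset.mul_sum]
    symm
    refine Finset.sum_nbij' (Equiv.swap v.castSucc v.succ * ·) (Equiv.swap v.castSucc v.succ * ·)
      ?_ ?_ ?_ ?_ ?_ <;> simp_all [Equiv.swap_mul_self_mul]
  have hS (v : Fin (n + 1)) : S v = c ^ (v : ℕ) * S 0 := by
    induction v using Fin.induction with
    | zero => simp
    | succ v ih => rw [hstep, ih, Fin.val_castSucc, Fin.val_succ, pow_succ', mul_assoc]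
  rw [← Finset.sum_fiberwise Finset.univ (fun π => π m) g]
  exact (Finset.sum_congr rfl fun v _ => hS v).trans (by rw [← Finset.sum_mul, hc, zero_mul])

lemma geom_sum_eq_zero_of_pow_eq_one {R : Type*} [CommRing R] [IsDomain R] {x : R} {n : ℕ}
    (hx : x ≠ 1) (hxn : x ^ n = 1) : ∑ i ∈ Finset.range n, x ^ i = 0 := by
  have h := geom_sum_mul x n
  rw [hxn, sub_self] at h
  exact (mul_eq_zero.1 h).resolve_right (sub_ne_zero.2 hx)

lemma Psym_prod {T : Type*} (Q : T → T → ℂ) {n : ℕ} (f : T → ℂ) (t : Fin n → T) :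
    Psym Q (fun s => ∏ i, f (s i)) t = (n.factorial : ℂ)⁻¹ * (∑ π, Qpi Q π t) * ∏ i, f (t i) := by
  simp only [Psym, Function.comp_apply, Equiv.prod_comp _ fun i => f (t i), Finset.sum_mul,
    mul_assoc]

section Anyon

variable {T : Type*} [LinearOrder T] {q : ℂ}

lemma anyonQ_of_lt {s t : T} (h : s < t) : anyonQ q s t = q := if_pos h

lemma anyonQ_of_gt {s t : T} (h : t < s) : anyonQ q s t = (starRingEnd ℂ) q := by
  rw [anyonQ, if_neg h.not_gt, if_pos h]

lemma Qpi_anyonQ_swap_mul (hq : ‖q‖ = 1) {n : ℕ} (t : Fin (n + 1) → T) {m : Fin (n + 1)}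
    (hm : ∀ i, i ≠ m → t i < t m) (π : Equiv.Perm (Fin (n + 1))) (v : Fin n)
    (hπ : π m = v.castSucc) :
    Qpi (anyonQ q) (Equiv.swap v.castSucc v.succ * π) t =
      (starRingEnd ℂ) q * Qpi (anyonQ q) π t := by
  obtain ⟨k, hk⟩ := π.surjective v.succ
  have hkm : k ≠ m := by
    rintro rfl
    exact Fin.castSucc_lt_succ.ne (hπ.symm.trans hk)
  rcases hkm.lt_or_gt with hkm' | hkm'
  · have h := Qpi_swap_mul (anyonQ q) t (Equiv.swap v.castSucc v.succ * π) v hkm'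
      (by simp [hk]) (by simp [hπ])
    rw [Equiv.swap_mul_self_mul, anyonQ_of_lt (hm k hkm)] at h
    have hqq : (starRingEnd ℂ) q * q = 1 := by
      rw [mul_comm, Complex.mul_conj', hq]; norm_num
    rw [h, ← mul_assoc, hqq, one_mul]
  · rw [Qpi_swap_mul (anyonQ q) t π v hkm' hπ hk, anyonQ_of_gt (hm k hkm)]

lemma sum_Qpi_anyonQ_eq_zero (hq : ‖q‖ = 1) (hq1 : q ≠ 1) {n : ℕ} (hqn : q ^ (n + 1) = 1)
    (t : Fin (n + 1) → T) (ht : Function.Injective t) :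
    ∑ π, Qpi (anyonQ q) π t = 0 := by
  obtain ⟨m, hm⟩ := Finite.exists_max t
  refine sum_perm_eq_zero_of_swap_mul _ m ((starRingEnd ℂ) q) ?_
    (Qpi_anyonQ_swap_mul hq t fun i hi => (hm i).lt_of_ne (ht.ne hi))
  rw [Fin.sum_univ_eq_sum_range (fun i => (starRingEnd ℂ) q ^ i)]
  exact geom_sum_eq_zero_of_pow_eq_one ((map_ne_one_iff _ (RingHom.injective _)).2 hq1)
    (by rw [← map_pow, hqn, map_one])

end Anyon

lemma quasiMeasurePreserving_eval_pair {α : Type*} [MeasurableSpace α] (μ : Measure α)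
    [SigmaFinite μ] {n : ℕ} {i j : Fin n} (hij : i ≠ j) :
    Measure.QuasiMeasurePreserving (fun t : Fin n → α => (t i, t j))
      (Measure.pi fun _ => μ) (μ.prod μ) := by
  cases n with
  | zero => exact i.elim0
  | succ n =>
    obtain ⟨j', rfl⟩ := Fin.exists_succAbove_eq hij.symm
    exact (QuasiMeasurePreserving.prodMap (Measure.QuasiMeasurePreserving.id μ)
      (Measure.quasiMeasurePreserving_eval (fun _ : Fin n => μ) j')).comp
      (measurePreserving_piFinSuccAbove (fun _ => μ) i).quasiMeasurePreserving

lemma ae_injective_pi {α : Type*} [MeasurableSpace α] (μ : Measure α) [SigmaFinite μ]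
    (hdiag : (μ.prod μ) {p : α × α | p.1 = p.2} = 0) (n : ℕ) :
    ∀ᵐ t ∂(Measure.pi fun _ : Fin n => μ), Function.Injective t := by
  have hne : ∀ᵐ p ∂(μ.prod μ), p.1 ≠ p.2 := measure_eq_zero_iff_ae_notMem.1 hdiag
  have hpair (i j : Fin n) : ∀ᵐ t ∂(Measure.pi fun _ : Fin n => μ), t i = t j → i = j := by
    by_cases hij : i = j
    · exact ae_of_all _ fun _ _ => hij
    · filter_upwards [(quasiMeasurePreserving_eval_pair μ hij).ae hne] with t ht h
      exact absurd h ht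
  filter_upwards [ae_all_iff.2 fun i => ae_all_iff.2 (hpair i)] with t ht i j
  exact ht i j

/-- anyon exclusion principle: if `q ≠ 1`, `|q| = 1` and `q^N = 1`
(`N ≥ 2`), then the `N`-fold `Q`-symmetric tensor power `f^{⊛N} = P_N(f^{⊗N})`
vanishes (σ^{⊗N}-almost everywhere, the diagonal being null). -/
theorem anyon_exclusion {T : Type*} [LinearOrder T] [MeasurableSpace T]
    (σ : Measure T) [SigmaFinite σ]
    (hdiag : (σ.prod σ) {p : T × T | p.1 = p.2} = 0)
    (q : ℂ) (hq : ‖q‖ = 1) (hq1 : q ≠ 1)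
    (N : ℕ) (hN : 2 ≤ N) (hqN : q ^ N = 1)
    (f : T → ℂ) :
    ∀ᵐ t ∂(Measure.pi fun _ : Fin N => σ),
      Psym (anyonQ q) (fun s => ∏ i, f (s i)) t = 0 := by
  obtain ⟨n, rfl⟩ : ∃ n, N = n + 1 := ⟨N - 1, by omega⟩
  filter_upwards [ae_injective_pi σ hdiag (n + 1)] with t ht
  rw [Psym_prod, sum_Qpi_anyonQ_eq_zero hq hq1 hqN t ht, mul_zero, zero_mul]
end

section
/- In the anyonic Q-Fock space over L²(T,σ), for Δ of finite measure, the squared norm of the n-fold Q-symmetric power satisfies ‖χ_Δ^{⊛n}‖²_{F^Q} = |[n]_q!|² σ(Δ)ⁿ/n!, where the Fock norm on the n-particle space carries weight n! and [n]_q! = ∏_{k=1}^n (1-q^k)/(1-q) for q ≠ 1. -/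
/-!
Write `Q_π(t)` as the product of the weights `Q(t_i, t_j)` over the pairs `i < j` that `π`
reverses. Since `Q(s, t) Q(t, s) = q q̄ = 1` for `s ≠ t`, such products over pairs on which two
orders of `Fin n` disagree form a cocycle in the orders. Comparing the orders `id`, `t` and `π`
gives, for injective `t` sorted by `ρ`, `Q_π(t) = c(t) q^{inv(πρ)}` with `|c(t)| = 1`; hence
`|Σ_π Q_π(t)| = |Σ_σ q^{inv σ}| = |[n]_q!|`, the last step being the insertion recursion for
inversions. As `χ_Δ^{⊗n}` is symmetric, `P_n χ_Δ^{⊗n}(t) = (1/n!) Σ_π Q_π(t) χ_Δ^{⊗n}(t)`, and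
since the diagonal is null almost every point of `Δⁿ` is injective, so `|P_n χ_Δ^{⊗n}|²` is a.e.
the constant `|[n]_q!|² / n!²` on `Δⁿ` and vanishes off it.
-/

open MeasureTheory

open Finset

section Discordance

variable {ι α β γ M : Type*} [Fintype ι] [LinearOrder α] [LinearOrder β] [LinearOrder γ]
  [CommMonoid M]

theorem Fintype.prod_eq_prod_filter_lt_mul_swap {a : ι → α} (ha : Function.Injective a)
    {f : ι × ι → M} (hf : ∀ i, f (i, i) = 1) :
    ∏ p, f p = ∏ p : ι × ι with a p.1 < a p.2, f p * f p.swap := by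
  have hswap : ∏ p : ι × ι with a p.1 < a p.2, f p.swap = ∏ p : ι × ι with a p.2 < a p.1, f p :=
    Finset.prod_equiv (Equiv.prodComm ι ι) (by simp) (by simp)
  have hgt : ∏ p : ι × ι with ¬a p.1 < a p.2, f p = ∏ p : ι × ι with a p.2 < a p.1, f p := by
    rw [← prod_filter_of_ne (p := fun p : ι × ι => a p.2 < a p.1), filter_filter]
    · congr 1
      exact filter_congr fun p _ => and_iff_right_of_imp fun h => h.not_gt
    · intro p hp hfp
      have hne : p.1 ≠ p.2 := fun h =>
        hfp (by rw [← hf p.1]; exact congrArg f (Prod.ext rfl h.symm))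
      exact (ha.ne hne).symm.lt_of_le (not_lt.1 (mem_filter.1 hp).2)
  rw [prod_mul_distrib, hswap, ← hgt, prod_filter_mul_prod_filter_not]

def discordantProd (w : ι → ι → M) (a : ι → α) (b : ι → β) : M :=
  ∏ p : ι × ι, if a p.1 < a p.2 ∧ b p.2 < b p.1 then w p.1 p.2 else 1

-- A pair discordant for `(a, b)` and for `(b, c)` is concordant for `(a, c)`; it contributes
-- `w i j * w j i = 1` on the left.
theorem discordantProd_mul_discordantProd {w : ι → ι → M} (hw : ∀ i j, i ≠ j → w i j * w j i = 1)
    {a : ι → α} {b : ι → β} {c : ι → γ} (ha : Function.Injective a)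
    (hb : Function.Injective b) (hc : Function.Injective c) :
    discordantProd w a b * discordantProd w b c = discordantProd w a c := by
  unfold discordantProd
  rw [← prod_mul_distrib, Fintype.prod_eq_prod_filter_lt_mul_swap ha (by simp),
    Fintype.prod_eq_prod_filter_lt_mul_swap ha (by simp)]
  refine prod_congr rfl fun ⟨i, j⟩ hij => ?_
  have hij : a i < a j := (mem_filter.1 hij).2
  have hne : i ≠ j := fun h => hij.ne (congrArg a h)
  rcases (hb.ne hne).lt_or_gt with hb' | hb' <;> rcases (hc.ne hne).lt_or_gt with hc' | hc' <;>
    simp [hij, hij.not_gt, hb', hb'.not_gt, hc', hc'.not_gt, hw i j hne]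

end Discordance

namespace Equiv.Perm

variable {n : ℕ}

def inversions (σ : Perm (Fin n)) : Finset (Fin n × Fin n) := {p | p.1 < p.2 ∧ σ p.2 < σ p.1}

def consSuccAbove (v : Fin (n + 1)) (σ : Perm (Fin n)) : Perm (Fin (n + 1)) :=
  (finSuccEquiv n).trans ((optionCongr σ).trans (finSuccEquiv' v).symm)

@[simp] theorem consSuccAbove_zero (v : Fin (n + 1)) (σ : Perm (Fin n)) :
    consSuccAbove v σ 0 = v := by
  simp [consSuccAbove]

@[simp] theorem consSuccAbove_succ (v : Fin (n + 1)) (σ : Perm (Fin n)) (j : Fin n) :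
    consSuccAbove v σ j.succ = v.succAbove (σ j) := by
  simp [consSuccAbove]

theorem consSuccAbove_bijective :
    Function.Bijective fun p : Fin (n + 1) × Perm (Fin n) => consSuccAbove p.1 p.2 := by
  refine (Fintype.bijective_iff_injective_and_card _).2 ⟨?_, by
    simp [Fintype.card_perm, Nat.factorial_succ]⟩
  rintro ⟨v, σ⟩ ⟨v', σ'⟩ h
  have hv : v = v' := by simpa using DFunLike.congr_fun h 0
  subst hv
  have hσ : σ = σ' := Equiv.ext fun j => by simpa using DFunLike.congr_fun h j.succ
  rw [hσ]

theorem card_inversions_consSuccAbove (v : Fin (n + 1)) (σ : Perm (Fin n)) :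
    #(consSuccAbove v σ).inversions = v + #σ.inversions := by
  have hcount : ∑ j : Fin n, (if (σ j).castSucc < v then 1 else 0) = (v : ℕ) := by
    rw [Equiv.sum_comp σ fun y : Fin n => if y.castSucc < v then 1 else 0, ← card_filter]
    simpa [Fin.lt_def] using (Fin.card_filter_val_lt (n := n) (m := v)).trans
      (min_eq_right (Nat.lt_succ_iff.1 v.2))
  simp only [inversions, card_filter, Fintype.sum_prod_type, Fin.sum_univ_succ, consSuccAbove_zero,
    consSuccAbove_succ, lt_irrefl, Fin.succ_pos, Fin.not_lt_zero, Fin.succ_lt_succ_iff,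
    Fin.succAbove_lt_succAbove_iff, Fin.succAbove_lt_iff_castSucc_lt]
  simp [hcount]

theorem sum_pow_card_inversions {R : Type*} [CommSemiring R] (q : R) (n : ℕ) :
    ∑ σ : Perm (Fin n), q ^ #σ.inversions = ∏ k ∈ range n, ∑ i ∈ range (k + 1), q ^ i := by
  induction n with
  | zero => simp [inversions]
  | succ n ih =>
    rw [← Fintype.sum_bijective _ consSuccAbove_bijective _ (fun σ => q ^ #σ.inversions)
      fun _ => rfl, Fintype.sum_prod_type, prod_range_succ, ← ih, mul_comm,
      ← Fin.sum_univ_eq_sum_range, sum_mul_sum]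
    simp only [card_inversions_consSuccAbove, pow_add]

end Equiv.Perm

theorem discordantProd_const_of_strictMono {n : ℕ} {α M : Type*} [LinearOrder α] [CommMonoid M]
    (q : M) {t : Fin n → α} {ρ : Equiv.Perm (Fin n)} (ht : StrictMono (t ∘ ρ))
    (π : Equiv.Perm (Fin n)) :
    discordantProd (fun _ _ => q) t π = q ^ #(π * ρ).inversions := by
  have hρ : ∀ i j, t (ρ i) < t (ρ j) ↔ i < j := fun _ _ => ht.lt_iff_lt
  rw [discordantProd, ← Fintype.prod_equiv (Equiv.prodCongr ρ ρ) _ _ fun _ => rfl,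
    Equiv.Perm.inversions, ← prod_const, prod_filter]
  simp only [Equiv.prodCongr_apply, Prod.map_fst, Prod.map_snd, hρ, Equiv.Perm.coe_mul,
    Function.comp_apply]
  -- the two sides differ only in their `Decidable` instances
  congr!

theorem norm_discordantProd {ι α β : Type*} [Fintype ι] [LinearOrder α] [LinearOrder β]
    {w : ι → ι → ℂ} (hw : ∀ i j, ‖w i j‖ = 1) (a : ι → α) (b : ι → β) :
    ‖discordantProd w a b‖ = 1 := by
  rw [discordantProd, norm_prod]
  exact prod_eq_one fun p _ => by split_ifs <;> simp [hw]

namespace MeasureTheory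

namespace Measure

variable {ι : Type*} [Fintype ι] {α : ι → Type*} [∀ i, MeasurableSpace (α i)]

theorem pi_map_eval_prod [DecidableEq ι] (μ : ∀ i, Measure (α i)) [∀ i, IsFiniteMeasure (μ i)]
    {i j : ι} (hij : i ≠ j) :
    (Measure.pi μ).map (fun x => (x i, x j))
      = (∏ k ∈ {i, j}ᶜ, μ k Set.univ) • (μ i).prod (μ j) := by
  have hC : ∏ k ∈ ({i, j} : Finset ι)ᶜ, μ k Set.univ ≠ ⊤ :=
    ENNReal.prod_ne_top fun k _ => measure_ne_top (μ k) Set.univ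
  have : IsFiniteMeasure ((∏ k ∈ ({i, j} : Finset ι)ᶜ, μ k Set.univ) • μ i) :=
    ⟨by rw [smul_apply, smul_eq_mul]; exact ENNReal.mul_lt_top hC.lt_top (measure_lt_top _ _)⟩
  rw [← prod_smul_left]
  refine (prod_eq fun s u hs hu => ?_).symm
  have hpre : (fun x : ∀ k, α k => (x i, x j)) ⁻¹' s ×ˢ u =
      Set.univ.pi (Function.update (Function.update (fun _ => Set.univ) i s) j u) := by
    ext x
    simp only [Set.mem_preimage, Set.mem_prod, Set.mem_univ_pi]
    refine ⟨fun h k => ?_, fun h => ⟨by simpa [hij] using h i, by simpa using h j⟩⟩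
    rcases eq_or_ne k j with rfl | hkj
    · simpa using h.2
    rcases eq_or_ne k i with rfl | hki
    · simpa [hkj] using h.1
    · simp [hkj, hki]
  have hrest : ∏ k ∈ {i, j}ᶜ, μ k (Function.update (Function.update (fun _ => Set.univ) i s) j u k)
      = ∏ k ∈ {i, j}ᶜ, μ k Set.univ :=
    prod_congr rfl fun k hk => by
      obtain ⟨hki, hkj⟩ : k ≠ i ∧ k ≠ j := by simpa [not_or] using hk
      simp [hki, hkj]
  rw [map_apply (by fun_prop) (hs.prod hu), hpre, pi_pi, ← prod_mul_prod_compl {i, j},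
    prod_pair hij, hrest, smul_apply, smul_eq_mul]
  simp only [Function.update_of_ne hij, Function.update_self]
  ring

theorem quasiMeasurePreserving_eval_prod (μ : ∀ i, Measure (α i)) [∀ i, IsFiniteMeasure (μ i)]
    {i j : ι} (hij : i ≠ j) :
    QuasiMeasurePreserving (fun x => (x i, x j)) (Measure.pi μ) ((μ i).prod (μ j)) :=
  ⟨by fun_prop, by classical rw [pi_map_eval_prod μ hij]; exact smul_absolutelyContinuous⟩

end Measure

theorem ae_injective_pi {ι α : Type*} [Fintype ι] [MeasurableSpace α]
    {ν : Measure α} [IsFiniteMeasure ν] (hν : (ν.prod ν) {p | p.1 = p.2} = 0) :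
    ∀ᵐ t ∂Measure.pi (fun _ : ι => ν), Function.Injective t := by
  classical
  have hpair : ∀ i j : ι, ∀ᵐ t ∂Measure.pi (fun _ : ι => ν), t i = t j → i = j := by
    intro i j
    rcases eq_or_ne i j with rfl | hij
    · exact .of_forall fun _ _ => rfl
    · refine ae_iff.2 <| measure_mono_null (fun t ht => ?_)
        ((Measure.quasiMeasurePreserving_eval_prod _ hij).preimage_null hν)
      exact (Classical.not_imp.1 ht).1
  filter_upwards [ae_all_iff.2 fun i => ae_all_iff.2 (hpair i)] with t ht i j using ht i j

theorem ae_injective_of_mem_univ_pi {ι α : Type*} [Fintype ι] [MeasurableSpace α]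
    {ν : Measure α} [SigmaFinite ν] (hν : (ν.prod ν) {p | p.1 = p.2} = 0) {Δ : Set α}
    (hΔ : MeasurableSet Δ) (hΔfin : ν Δ ≠ ⊤) :
    ∀ᵐ t ∂Measure.pi (fun _ : ι => ν), t ∈ Set.univ.pi (fun _ => Δ) → Function.Injective t := by
  have : IsFiniteMeasure (ν.restrict Δ) := ⟨by simpa using hΔfin.lt_top⟩
  rw [← ae_restrict_iff' (.univ_pi fun _ => hΔ), Measure.restrict_pi_pi]
  refine ae_injective_pi ?_
  rw [Measure.prod_restrict]
  exact nonpos_iff_eq_zero.1 ((Measure.restrict_apply_le _ _).trans_eq hν)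

end MeasureTheory

section Symmetrization

variable {T : Type*} {Q : T → T → ℂ} {n : ℕ}

theorem Qpi_eq_discordantProd (π : Equiv.Perm (Fin n)) (t : Fin n → T) :
    Qpi Q π t = discordantProd (fun i j => Q (t i) (t j)) id π := by
  rw [Qpi, prod_filter]
  rfl

theorem Psym_apply_of_perm_invariant {f : (Fin n → T) → ℂ}
    (hf : ∀ (π : Equiv.Perm (Fin n)) t, f (t ∘ π) = f t) (t : Fin n → T) :
    Psym Q f t = (n.factorial : ℂ)⁻¹ * (∑ π, Qpi Q π t) * f t := by
  simp [Psym, hf, sum_mul, mul_assoc]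

theorem Qpi_eq_mul_pow_card_inversions [LinearOrder T] {q : ℂ} (hq : ‖q‖ = 1)
    (hQ : ∀ s t, Q s t = if s < t then q else (starRingEnd ℂ) q) {t : Fin n → T}
    (ht : Function.Injective t) {ρ : Equiv.Perm (Fin n)} (hρ : StrictMono (t ∘ ρ))
    (π : Equiv.Perm (Fin n)) :
    Qpi Q π t = discordantProd (fun i j => Q (t i) (t j)) id t * q ^ #(π * ρ).inversions := by
  have hqq : q * (starRingEnd ℂ) q = 1 := by
    rw [Complex.mul_conj', hq]; norm_num
  have hw_inv : ∀ i j, i ≠ j → Q (t i) (t j) * Q (t j) (t i) = 1 := by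
    intro i j hij
    rcases (ht.ne hij).lt_or_gt with h | h
    · simp [hQ, h, h.not_gt, hqq]
    · simp [hQ, h, h.not_gt, mul_comm, hqq]
  have hdisc : discordantProd (fun i j => Q (t i) (t j)) t π = q ^ #(π * ρ).inversions := by
    rw [← discordantProd_const_of_strictMono q hρ π, discordantProd, discordantProd]
    refine prod_congr rfl fun p _ => ?_
    split_ifs with h
    · simp [hQ, h.1]
    · rfl
  rw [Qpi_eq_discordantProd, ← hdisc,
    discordantProd_mul_discordantProd hw_inv Function.injective_id ht π.injective]

theorem norm_sum_Qpi_of_injective [LinearOrder T] {q : ℂ} (hq : ‖q‖ = 1)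
    (hQ : ∀ s t, Q s t = if s < t then q else (starRingEnd ℂ) q) {t : Fin n → T}
    (ht : Function.Injective t) :
    ‖∑ π, Qpi Q π t‖ = ‖∏ k ∈ range n, ∑ i ∈ range (k + 1), q ^ i‖ := by
  set ρ := Tuple.sort t
  have hρ : StrictMono (t ∘ ρ) :=
    (Tuple.monotone_sort t).strictMono_of_injective (ht.comp ρ.injective)
  have hw_norm : ∀ i j, ‖Q (t i) (t j)‖ = 1 := fun i j => by rw [hQ]; split_ifs <;> simp [hq]
  rw [sum_congr rfl fun π _ => Qpi_eq_mul_pow_card_inversions hq hQ ht hρ π, ← mul_sum, norm_mul,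
    norm_discordantProd hw_norm, one_mul,
    Fintype.sum_equiv (Equiv.mulRight ρ) (fun π => q ^ #(π * ρ).inversions)
      (fun σ => q ^ #σ.inversions) fun _ => rfl,
    Equiv.Perm.sum_pow_card_inversions]

theorem Psym_prod_indicator (Δ : Set T) (t : Fin n → T) :
    Psym Q (fun s => ∏ i : Fin n, Δ.indicator (fun _ => (1 : ℂ)) (s i)) t
      = (n.factorial : ℂ)⁻¹ * (∑ π, Qpi Q π t) * (Set.univ.pi fun _ => Δ).indicator 1 t := by
  rw [Psym_apply_of_perm_invariant fun π s => Equiv.prod_comp π fun i => Δ.indicator _ (s i),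
    ← Finset.coe_univ, Set.indicator_pi_one_apply]
  rfl

theorem norm_sq_Psym_prod_indicator [LinearOrder T] {q : ℂ} (hq : ‖q‖ = 1)
    (hQ : ∀ s t, Q s t = if s < t then q else (starRingEnd ℂ) q) {Δ : Set T} {t : Fin n → T}
    (ht : t ∈ Set.univ.pi (fun _ => Δ) → Function.Injective t) :
    ‖Psym Q (fun s => ∏ i : Fin n, Δ.indicator (fun _ => (1 : ℂ)) (s i)) t‖ ^ 2
      = (Set.univ.pi fun _ => Δ).indicator
          (fun _ => (‖∏ k ∈ range n, ∑ i ∈ range (k + 1), q ^ i‖ / n.factorial) ^ 2) t := by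
  rw [Psym_prod_indicator]
  by_cases h : t ∈ Set.univ.pi fun _ => Δ
  · rw [Set.indicator_of_mem h, Set.indicator_of_mem h, Pi.one_apply, mul_one, norm_mul,
      norm_sum_Qpi_of_injective hq hQ (ht h)]
    simp [div_eq_inv_mul]
  · rw [Set.indicator_of_notMem h, Set.indicator_of_notMem h, mul_zero, norm_zero]
    simp

end Symmetrization

theorem anyon_power_norm_general {T : Type*} [LinearOrder T] [MeasurableSpace T]
    (σ : Measure T) [SigmaFinite σ]
    (hdiag : (σ.prod σ) {p : T × T | p.1 = p.2} = 0)
    (q : ℂ) (hq : ‖q‖ = 1)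
    (Q : T → T → ℂ) (hQ : ∀ s t, Q s t = if s < t then q else (starRingEnd ℂ) q)
    (Δ : Set T) (hΔ : MeasurableSet Δ)
    (a : ℝ) (ha : 0 ≤ a) (hσΔ : σ Δ = ENNReal.ofReal a)
    (n : ℕ) :
    (n.factorial : ℝ) *
      ∫ t, ‖Psym Q
          (fun s => ∏ i : Fin n, Set.indicator Δ (fun _ => (1 : ℂ)) (s i)) t‖ ^ 2
        ∂(Measure.pi fun _ : Fin n => σ)
      = ‖∏ k ∈ Finset.range n, ∑ i ∈ Finset.range (k + 1), q ^ i‖ ^ 2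
          * a ^ n / (n.factorial : ℝ) := by
  have hae : (fun t => ‖Psym Q (fun s => ∏ i : Fin n, Δ.indicator (fun _ => (1 : ℂ)) (s i)) t‖ ^ 2)
      =ᵐ[Measure.pi fun _ => σ] (Set.univ.pi fun _ => Δ).indicator
        fun _ => (‖∏ k ∈ range n, ∑ i ∈ range (k + 1), q ^ i‖ / n.factorial) ^ 2 := by
    filter_upwards [ae_injective_of_mem_univ_pi hdiag hΔ (by simp [hσΔ])] with t ht
    exact norm_sq_Psym_prod_indicator hq hQ ht
  rw [integral_congr_ae hae, integral_indicator_const _ (.univ_pi fun _ => hΔ), measureReal_def,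
    Measure.pi_pi]
  simp only [hσΔ, prod_const, card_univ, Fintype.card_fin, ENNReal.toReal_pow,
    ENNReal.toReal_ofReal ha, norm_prod, smul_eq_mul]
  field_simp

/-- in the anyonic `Q`-Fock space the `n`-particle vector
`χ_Δ^{⊛n} = P_n(χ_Δ^{⊗n})` has squared Fock norm (with weight `n!`)
`‖χ_Δ^{⊛n}‖² = |[n]_q!|² σ(Δ)ⁿ / n!`. -/
theorem anyon_power_norm {T : Type*} [LinearOrder T] [MeasurableSpace T]
    (σ : Measure T) [SigmaFinite σ]
    (hord : MeasurableSet {p : T × T | p.1 < p.2})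
    (hdiag : (σ.prod σ) {p : T × T | p.1 = p.2} = 0)
    (q : ℂ) (hq : ‖q‖ = 1) (hq1 : q ≠ 1)
    (Q : T → T → ℂ) (hQ : ∀ s t, Q s t = if s < t then q else (starRingEnd ℂ) q)
    (Δ : Set T) (hΔ : MeasurableSet Δ)
    (a : ℝ) (ha : 0 ≤ a) (hσΔ : σ Δ = ENNReal.ofReal a)
    (n : ℕ) :
    (n.factorial : ℝ) *
      ∫ t, ‖Psym Q
          (fun s => ∏ i : Fin n, Set.indicator Δ (fun _ => (1 : ℂ)) (s i)) t‖ ^ 2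
        ∂(Measure.pi fun _ : Fin n => σ)
      = ‖∏ k ∈ Finset.range n, ∑ i ∈ Finset.range (k + 1), q ^ i‖ ^ 2
          * a ^ n / (n.factorial : ℝ) :=
  anyon_power_norm_general σ hdiag q hq Q hQ Δ hΔ a ha hσΔ n
end

section
/- Commutation relation between annihilation and creation operators: for g, h ∈ L²(T) and any Q-symmetric f^{(n)}, a⁻(g) a⁺(h) f^{(n)} equals the pointwise expression ∫ σ(ds) conj(g(s)) [h(s) f^{(n)}(t_1,...,t_n) + Σ_{k=1}^n Q(s,t_k) Q(t_1,t_k)···Q(t_{k-1},t_k) h(t_k) f^{(n)}(s, t_1,...,ť_k,...,t_n)], which is the sum of (g,h)_{L²} f^{(n)} and the Q-twisted term a⁺-after-a⁻ evaluated with kernel Q; informally, ∂_s ∂†_t = δ(s,t) + Q(s,t) ∂†_t ∂_s. -/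
open MeasureTheory

/-- `f` is `Q`-symmetric in its `n+1` variables. -/
def QSymmF {T : Type*} (Q : T → T → ℂ) {n : ℕ} (f : (Fin (n + 1) → T) → ℂ) : Prop :=
  ∀ (j : Fin n) (t : Fin (n + 1) → T),
    f t = Q (t j.castSucc) (t j.succ) * f (t ∘ Equiv.swap j.castSucc j.succ)

/-- The creation operator: `a⁺(h) f = P_{n+1}(h ⊗ f)`. -/
noncomputable def creation {T : Type*} (Q : T → T → ℂ) {n : ℕ} (h : T → ℂ)
    (f : (Fin n → T) → ℂ) : (Fin (n + 1) → T) → ℂ :=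
  Psym Q (fun t => h (t 0) * f (t ∘ Fin.succ))

/-- The annihilation operator on the `(n+1)`-particle space:
`(a⁻(g) F)(t_1,…,t_n) = (n+1) ∫ conj(g(s)) F(s,t_1,…,t_n) dσ(s)`. -/
noncomputable def annihilation {T : Type*} [MeasurableSpace T] (σ : Measure T) {n : ℕ}
    (g : T → ℂ) (F : (Fin (n + 1) → T) → ℂ) : (Fin n → T) → ℂ :=
  fun t => ((n : ℂ) + 1) * ∫ s, (starRingEnd ℂ) (g s) * F (Fin.cons s t) ∂σ

/-!
Write a permutation `π` of `Fin (m + 1)` uniquely as `frontPerm k σ`: first move slot `k` to the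
front (the cycle `Fin.cycleRange k`), then permute the remaining slots by `σ`. The inversions of
`π` are the pairs `(i, k)` with `i < k` together with the inversions of `σ` transported by
`k.succAbove`, so `Q_π(t) = ∏_{i<k} Q(t_i, t_k) ⋅ Q_σ(t ∘ k.succAbove)`. Moving `t_k` to the front by
`k` adjacent transpositions costs exactly `∏_{i<k} Q(t_i, t_k)`, so induction on `m` upgrades
`Q`-symmetry under adjacent transpositions to `f t = Q_π(t) f(t ∘ π⁻¹)` for every `π`.

Consequently, in `P_{n+2}(h ⊗ f)` the `(n+1)!` permutations with the same `k` contribute equally and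
`a⁺(h) f (t_0, …, t_{n+1}) = (n+2)⁻¹ ∑_k ∏_{i<k} Q(t_i, t_k) h(t_k) f(t with t_k removed)`.
Taking `t_0 = s`, the term `k = 0` gives `h(s) f(t)` and the others the `Q`-twisted sum; the
factor `n + 2` of `a⁻` cancels the normalisation.
-/

open Finset Equiv

def frontPerm {m : ℕ} (k : Fin (m + 1)) (σ : Perm (Fin m)) : Perm (Fin (m + 1)) :=
  Perm.decomposeFin.symm (0, σ) * k.cycleRange

section frontPerm

variable {m : ℕ} (k : Fin (m + 1)) (σ : Perm (Fin m))

@[simp] lemma frontPerm_apply_self : frontPerm k σ k = 0 := by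
  simp [frontPerm, Perm.decomposeFin_symm_apply_zero]

@[simp] lemma frontPerm_apply_succAbove (j : Fin m) :
    frontPerm k σ (k.succAbove j) = (σ j).succ := by
  simp [frontPerm, Perm.decomposeFin_symm_apply_succ]

@[simp] lemma frontPerm_symm_zero : (frontPerm k σ).symm 0 = k := by
  rw [symm_apply_eq, frontPerm_apply_self]

@[simp] lemma frontPerm_symm_succ (i : Fin m) :
    (frontPerm k σ).symm i.succ = k.succAbove (σ.symm i) := by
  rw [symm_apply_eq, frontPerm_apply_succAbove, apply_symm_apply]

lemma comp_frontPerm_inv {T : Type*} (u : Fin (m + 1) → T) :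
    u ∘ ⇑(frontPerm k σ)⁻¹ = Fin.cons (u k) ((u ∘ k.succAbove) ∘ ⇑σ⁻¹) := by
  funext j
  induction j using Fin.cases with
  | zero => simp
  | succ i => simp

end frontPerm

lemma frontPerm_injective (m : ℕ) :
    Function.Injective (fun p : Fin (m + 1) × Perm (Fin m) => frontPerm p.1 p.2) := by
  rintro ⟨k, σ⟩ ⟨k', σ'⟩ h
  simp only at h
  obtain rfl : k = k' :=
    (frontPerm k' σ').injective (by rw [frontPerm_apply_self, ← h, frontPerm_apply_self])
  obtain rfl : σ = σ' := Equiv.ext fun j => Fin.succ_injective _ <| by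
    rw [← frontPerm_apply_succAbove, h, frontPerm_apply_succAbove]
  rfl

lemma frontPerm_bijective (m : ℕ) :
    Function.Bijective (fun p : Fin (m + 1) × Perm (Fin m) => frontPerm p.1 p.2) := by
  rw [Fintype.bijective_iff_injective_and_card]
  exact ⟨frontPerm_injective m, by simp [Fintype.card_perm, Nat.factorial_succ]⟩

section Qpi

variable {T : Type*} (Q : T → T → ℂ)

lemma Qpi_one {m : ℕ} (t : Fin m → T) : Qpi Q 1 t = 1 :=
  prod_eq_one fun p hp => by
    obtain ⟨-, hlt, hgt⟩ := mem_filter.mp hp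
    exact absurd hlt hgt.not_gt

lemma Qpi_frontPerm {m : ℕ} (k : Fin (m + 1)) (σ : Perm (Fin m)) (t : Fin (m + 1) → T) :
    Qpi Q (frontPerm k σ) t =
      (∏ i ∈ univ.filter (fun i => i < k), Q (t i) (t k)) * Qpi Q σ (t ∘ k.succAbove) := by
  simp only [Qpi, prod_filter, Fintype.prod_prod_type]
  simp_rw [Fin.prod_univ_succAbove _ k]
  simp [← prod_mul_distrib, ite_mul]

end Qpi

namespace Fin

lemma swap_castSucc_succ_comp_succAbove {m : ℕ} (k : Fin m) :
    swap k.castSucc k.succ ∘ k.castSucc.succAbove = k.succ.succAbove := by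
  funext j
  simp only [Function.comp_apply, swap_apply_def, succAbove, lt_def, Fin.ext_iff]
  split_ifs <;> simp only [val_castSucc, val_succ] at * <;> omega

lemma filter_lt_succ {m : ℕ} (k : Fin m) :
    univ.filter (fun i : Fin (m + 1) => i < k.succ) =
      insert k.castSucc (univ.filter (fun i => i < k.castSucc)) := by
  ext i
  simp only [mem_filter, mem_univ, true_and, mem_insert, lt_def, Fin.ext_iff, val_succ,
    val_castSucc]
  omega

lemma prod_filter_lt_succ {M : Type*} [CommMonoid M] {m : ℕ} (g : Fin (m + 1) → M) (k : Fin m) :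
    ∏ i ∈ univ.filter (fun i => i < k.succ), g i =
      g 0 * ∏ i ∈ univ.filter (fun i => i < k), g i.succ := by
  rw [prod_filter, prod_univ_succ, prod_filter]
  simp [succ_pos]

lemma cons_comp_swap_succ {T : Type*} {m : ℕ} (a : T) (w : Fin m → T) (i j : Fin m) :
    (cons a w : Fin (m + 1) → T) ∘ swap i.succ j.succ = cons a (w ∘ swap i j) := by
  funext l
  induction l using Fin.cases with
  | zero => simp [swap_apply_of_ne_of_ne (succ_ne_zero i).symm (succ_ne_zero j).symm]
  | succ l => simp [(succ_injective m).swap_apply]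

end Fin

namespace QSymmF

variable {T : Type*} {Q : T → T → ℂ}

lemma cons {m : ℕ} {f : (Fin (m + 2) → T) → ℂ} (hf : QSymmF Q f) (a : T) :
    QSymmF Q (fun w : Fin (m + 1) → T => f (Fin.cons a w)) := by
  intro j w
  simpa [← Fin.cons_comp_swap_succ] using hf j.succ (Fin.cons a w)

lemma prod_mul_cons {m : ℕ} {f : (Fin (m + 1) → T) → ℂ} (hf : QSymmF Q f)
    (k : Fin (m + 1)) (t : Fin (m + 1) → T) :
    (∏ i ∈ univ.filter (fun i => i < k), Q (t i) (t k)) *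
      f (Fin.cons (t k) (t ∘ k.succAbove)) = f t := by
  induction k using Fin.induction generalizing t with
  | zero =>
    simp only [Fin.not_lt_zero, filter_false, prod_empty, one_mul, Fin.succAbove_zero]
    exact congrArg f (Fin.cons_self_tail t)
  | succ k ih =>
    set t' := t ∘ swap k.castSucc k.succ
    have ht' : ∀ i < k.castSucc, t' i = t i := fun i hi =>
      congrArg t (swap_apply_of_ne_of_ne hi.ne (hi.trans k.castSucc_lt_succ).ne)
    have hcons : (Fin.cons (t k.succ) (t ∘ k.succ.succAbove) : Fin (m + 1) → T) =
        Fin.cons (t' k.castSucc) (t' ∘ k.castSucc.succAbove) := by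
      simp [t', Function.comp_assoc, Fin.swap_castSucc_succ_comp_succAbove]
    have hprod : ∏ i ∈ univ.filter (fun i => i < k.castSucc), Q (t' i) (t' k.castSucc) =
        ∏ i ∈ univ.filter (fun i => i < k.castSucc), Q (t i) (t k.succ) :=
      prod_congr rfl fun i hi => by
        rw [ht' i (mem_filter.mp hi).2, show t' k.castSucc = t k.succ by simp [t']]
    rw [Fin.filter_lt_succ, prod_insert (by simp), mul_assoc, hcons, ← hprod, ih t', ← hf k t]

lemma eq_Qpi_mul {m : ℕ} {f : (Fin (m + 1) → T) → ℂ} (hf : QSymmF Q f)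
    (π : Perm (Fin (m + 1))) (t : Fin (m + 1) → T) : f t = Qpi Q π t * f (t ∘ ⇑π⁻¹) := by
  induction m with
  | zero =>
    obtain rfl : π = 1 := Equiv.ext fun _ => Fin.subsingleton_one.elim _ _
    rw [Qpi_one, one_mul, inv_one, Perm.coe_one, Function.comp_id]
  | succ m ih =>
    obtain ⟨⟨k, σ⟩, rfl⟩ := (frontPerm_bijective (m + 1)).2 π
    have hrest := ih (hf.cons (t k)) σ (t ∘ k.succAbove)
    rw [comp_frontPerm_inv, Qpi_frontPerm, mul_assoc, ← hrest, hf.prod_mul_cons]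

end QSymmF

section creation

variable {T : Type*} {Q : T → T → ℂ} {n : ℕ} (h : T → ℂ) {f : (Fin (n + 1) → T) → ℂ}

lemma creation_apply (hf : QSymmF Q f) (u : Fin (n + 2) → T) :
    creation Q h f u = ((n : ℂ) + 2)⁻¹ * ∑ k : Fin (n + 2),
      (∏ i ∈ univ.filter (fun i => i < k), Q (u i) (u k)) * (h (u k) * f (u ∘ k.succAbove)) := by
  have hterm : ∀ k σ, Qpi Q (frontPerm k σ) u *
      (h ((u ∘ ⇑(frontPerm k σ)⁻¹) 0) * f ((u ∘ ⇑(frontPerm k σ)⁻¹) ∘ Fin.succ)) =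
      (∏ i ∈ univ.filter (fun i => i < k), Q (u i) (u k)) * (h (u k) * f (u ∘ k.succAbove)) := by
    intro k σ
    rw [comp_frontPerm_inv, Qpi_frontPerm, hf.eq_Qpi_mul σ (u ∘ k.succAbove)]
    simp only [Fin.cons_zero, Fin.cons_comp_succ]
    ring
  have hfact : ((n + 2).factorial : ℂ)⁻¹ * (n + 1).factorial = ((n : ℂ) + 2)⁻¹ := by
    rw [Nat.factorial_succ (n + 1), Nat.cast_mul, mul_inv, mul_assoc,
      inv_mul_cancel₀ (Nat.cast_ne_zero.mpr (Nat.factorial_ne_zero _)), mul_one]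
    push_cast
    ring
  calc creation Q h f u
      = ((n + 2).factorial : ℂ)⁻¹ * ∑ p : Fin (n + 2) × Perm (Fin (n + 1)),
          Qpi Q (frontPerm p.1 p.2) u * (h ((u ∘ ⇑(frontPerm p.1 p.2)⁻¹) 0) *
            f ((u ∘ ⇑(frontPerm p.1 p.2)⁻¹) ∘ Fin.succ)) := by
        rw [creation, Psym, (frontPerm_bijective (n + 1)).sum_comp
          (fun π => Qpi Q π u * (h ((u ∘ ⇑π⁻¹) 0) * f ((u ∘ ⇑π⁻¹) ∘ Fin.succ)))]
    _ = ((n + 2).factorial : ℂ)⁻¹ * ∑ k : Fin (n + 2), ((n + 1).factorial : ℂ) *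
          ((∏ i ∈ univ.filter (fun i => i < k), Q (u i) (u k)) *
            (h (u k) * f (u ∘ k.succAbove))) := by
        rw [Fintype.sum_prod_type]
        simp only [hterm, sum_const, card_univ, Fintype.card_perm, Fintype.card_fin, nsmul_eq_mul]
    _ = _ := by rw [← mul_sum, ← mul_assoc, hfact]

lemma creation_cons_apply (hf : QSymmF Q f) (s : T) (t : Fin (n + 1) → T) :
    creation Q h f (Fin.cons s t) = ((n : ℂ) + 2)⁻¹ * (h s * f t + ∑ k : Fin (n + 1),
      Q s (t k) * (∏ i ∈ univ.filter (fun i => i < k), Q (t i) (t k)) * h (t k) *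
        f (Fin.cons s (t ∘ k.succAbove))) := by
  rw [creation_apply h hf, Fin.sum_univ_succ]
  simp only [Fin.prod_filter_lt_succ, Fin.cons_comp_succ_succAbove, Fin.cons_zero, Fin.cons_succ,
    Fin.not_lt_zero, filter_false, prod_empty, one_mul, Fin.succAbove_zero, Fin.cons_comp_succ,
    mul_assoc]
  rfl

end creation

theorem annihilation_creation_commutation_general {T : Type*} [MeasurableSpace T]
    (σ : Measure T) (Q : T → T → ℂ)
    (n : ℕ) (f : (Fin (n + 1) → T) → ℂ) (hf : QSymmF Q f)
    (g h : T → ℂ) :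
    annihilation σ g (creation Q h f) = fun t : Fin (n + 1) → T =>
      ∫ s, (starRingEnd ℂ) (g s) *
        (h s * f t + ∑ k : Fin (n + 1),
          Q s (t k) * (∏ i ∈ Finset.univ.filter (fun i : Fin (n + 1) => i < k),
              Q (t i) (t k)) * h (t k) * f (Fin.cons s (t ∘ Fin.succAbove k))) ∂σ := by
  funext t
  simp only [annihilation, creation_cons_apply h hf, mul_left_comm _ ((n : ℂ) + 2)⁻¹]
  rw [integral_const_mul, ← mul_assoc, show ((n + 1 : ℕ) : ℂ) + 1 = (n : ℂ) + 2 by push_cast; ring,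
    mul_inv_cancel₀ (by exact_mod_cast (n + 1).succ_ne_zero), one_mul]

/-- the commutation relation `∂_s ∂†_t = δ(s,t) + Q(s,t) ∂†_t ∂_s`
in smeared, pointwise form: for `Q`-symmetric `f⁽ⁿ⁾`,
`a⁻(g) a⁺(h) f = ∫ conj(g(s)) [h(s) f(t) + Σ_k Q(s,t_k) Q(t_1,t_k)⋯Q(t_{k-1},t_k)
h(t_k) f(s,t_1,…,ť_k,…,t_n)] dσ(s)`. -/
theorem annihilation_creation_commutation {T : Type*} [MeasurableSpace T]
    (σ : Measure T) (Q : T → T → ℂ)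
    (hherm : ∀ s t, (starRingEnd ℂ) (Q t s) = Q s t)
    (habs : ∀ s t, ‖Q s t‖ = 1)
    (n : ℕ) (f : (Fin (n + 1) → T) → ℂ) (hf : QSymmF Q f)
    (g h : T → ℂ) :
    annihilation σ g (creation Q h f) = fun t : Fin (n + 1) → T =>
      ∫ s, (starRingEnd ℂ) (g s) *
        (h s * f t + ∑ k : Fin (n + 1),
          Q s (t k) * (∏ i ∈ Finset.univ.filter (fun i : Fin (n + 1) => i < k),
              Q (t i) (t k)) * h (t k) * f (Fin.cons s (t ∘ Fin.succAbove k))) ∂σ :=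
  annihilation_creation_commutation_general σ Q n f hf g h
end
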